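/- For any two probability measures P and Q on a measurable space, the Jensen–Shannon divergence is bounded above by the total variation distance: JSD(P, Q) ≤ TV(P, Q). -/

import Mathlib

/-!
Put `M = (P + Q) / 2` and `p = dP/dM`, `q = dQ/dM`, so that `p + q = 2` and
`JSD(P, Q) = ½ ∫ (p log p + q log q) dM`. From `log t ≤ t - 1`, for `a + b = 2` one gets
`a log a + b log b ≤ (a - b)² / 2 ≤ |a - b|`, hence `JSD(P, Q) ≤ ½ ∫ |p - q| dM`. Finally
`∫ |p - q| dM = 2 (P(A) - Q(A))` with `A = {p ≥ q}`, because `∫ (p - q) dM = 0`.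
-/

open MeasureTheory
open scoped ENNReal

open Classical in
/-- Kullback–Leibler divergence, valued in the extended reals:
`KL(P‖Q) = ∫ log (dP/dQ) dP` if `P ≪ Q` and the log-likelihood ratio is
`P`-integrable, and `∞` otherwise. -/
noncomputable def klDiv {Ω : Type*} [MeasurableSpace Ω] (P Q : Measure Ω) : EReal :=
  if P ≪ Q ∧ Integrable (llr P Q) P then ((∫ x, llr P Q x ∂P : ℝ) : EReal) else ⊤

/-- Jensen–Shannon divergence:
`JSD(P,Q) = (1/2) KL(P‖M) + (1/2) KL(Q‖M)` with `M = (1/2)(P + Q)`. -/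
noncomputable def jsDiv {Ω : Type*} [MeasurableSpace Ω] (P Q : Measure Ω) : EReal :=
  (1 / 2 : EReal) * klDiv P ((2 : ℝ≥0∞)⁻¹ • (P + Q))
    + (1 / 2 : EReal) * klDiv Q ((2 : ℝ≥0∞)⁻¹ • (P + Q))

/-- Total variation distance between two measures:
`TV(P,Q) = sup_{A measurable} |P(A) - Q(A)|`. -/
noncomputable def tvDist {Ω : Type*} [MeasurableSpace Ω] (P Q : Measure Ω) : ℝ :=
  ⨆ A : {s : Set Ω // MeasurableSet s}, |(P A.1).toReal - (Q A.1).toReal|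

open Real Measure

lemma mul_log_add_mul_log_le_abs_sub {a b : ℝ} (ha : 0 ≤ a) (hb : 0 ≤ b) (hab : a + b = 2) :
    a * log a + b * log b ≤ |a - b| := by
  have hlog_le {t : ℝ} (ht : 0 ≤ t) : t * log t ≤ t * (t - 1) := by
    rcases ht.eq_or_lt with rfl | ht
    · simp
    · exact mul_le_mul_of_nonneg_left (log_le_sub_one_of_pos ht) ht.le
  have habs : |a - b| ≤ 2 := abs_le.2 ⟨by linarith, by linarith⟩
  -- `a (a - 1) + b (b - 1) = (a - b)² / 2` because `a + b = 2`
  nlinarith [hlog_le ha, hlog_le hb, sq_abs (a - b), abs_nonneg (a - b)]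

lemma integrable_mul_log_of_ae_mem_Icc {Ω : Type*} [MeasurableSpace Ω] {μ : Measure Ω}
    [IsFiniteMeasure μ] {f : Ω → ℝ} (hf : AEStronglyMeasurable f μ) {a b : ℝ}
    (hfab : ∀ᵐ x ∂μ, f x ∈ Set.Icc a b) : Integrable (fun x ↦ f x * log (f x)) μ := by
  obtain ⟨K, hK⟩ := isCompact_Icc.exists_bound_of_continuousOn continuous_mul_log.continuousOn
  exact .of_bound (continuous_mul_log.comp_aestronglyMeasurable hf) K (hfab.mono fun x ↦ hK _)

lemma klDiv_eq_integral_rnDeriv_mul_log {Ω : Type*} [MeasurableSpace Ω] {P M : Measure Ω}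
    [SigmaFinite P] [P.HaveLebesgueDecomposition M] (hPM : P ≪ M)
    (h : Integrable (fun x ↦ (P.rnDeriv M x).toReal * log (P.rnDeriv M x).toReal) M) :
    klDiv P M =
      ((∫ x, (P.rnDeriv M x).toReal * log (P.rnDeriv M x).toReal ∂M : ℝ) : EReal) := by
  rw [klDiv, if_pos ⟨hPM, (integrable_rnDeriv_mul_log_iff hPM).1 h⟩,
    integral_rnDeriv_mul_log hPM]

lemma abs_real_sub_le_tvDist {Ω : Type*} [MeasurableSpace Ω] (P Q : Measure Ω)
    [IsFiniteMeasure P] [IsFiniteMeasure Q] {s : Set Ω} (hs : MeasurableSet s) :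
    |P.real s - Q.real s| ≤ tvDist P Q := by
  refine le_ciSup (f := fun A : {s : Set Ω // MeasurableSet s} ↦
    |(P A.1).toReal - (Q A.1).toReal|) ⟨P.real .univ + Q.real .univ, ?_⟩ ⟨s, hs⟩
  rintro _ ⟨A, rfl⟩
  exact abs_sub_le_of_nonneg_of_le measureReal_nonneg
    ((measureReal_mono (Set.subset_univ _)).trans (le_add_of_nonneg_right measureReal_nonneg))
    measureReal_nonneg
    ((measureReal_mono (Set.subset_univ _)).trans (le_add_of_nonneg_left measureReal_nonneg))

instance isFiniteMeasure_half_smul_add {Ω : Type*} [MeasurableSpace Ω] (P Q : Measure Ω)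
    [IsFiniteMeasure P] [IsFiniteMeasure Q] : IsFiniteMeasure ((2 : ℝ≥0∞)⁻¹ • (P + Q)) :=
  (P + Q).smul_finite (by simp)

lemma toReal_rnDeriv_add_toReal_rnDeriv_half_smul_add {Ω : Type*} [MeasurableSpace Ω]
    (P Q : Measure Ω) [IsFiniteMeasure P] [IsFiniteMeasure Q] :
    ∀ᵐ x ∂(2 : ℝ≥0∞)⁻¹ • (P + Q), (P.rnDeriv ((2 : ℝ≥0∞)⁻¹ • (P + Q)) x).toReal
      + (Q.rnDeriv ((2 : ℝ≥0∞)⁻¹ • (P + Q)) x).toReal = 2 := by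
  set M := (2 : ℝ≥0∞)⁻¹ • (P + Q)
  have hPQ : P + Q = (2 : ℝ≥0∞) • M := by
    rw [smul_smul, ENNReal.mul_inv_cancel two_ne_zero ENNReal.ofNat_ne_top, one_smul]
  have h2M := M.rnDeriv_smul_left_of_ne_top M (ENNReal.ofNat_ne_top (n := 2))
  rw [← hPQ] at h2M
  filter_upwards [rnDeriv_add P Q M, h2M, M.rnDeriv_self, P.rnDeriv_lt_top M,
    Q.rnDeriv_lt_top M] with x hadd h2 hone hP hQ
  rw [← ENNReal.toReal_add hP.ne hQ.ne, ← Pi.add_apply, ← hadd, h2]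
  simp [hone]

lemma integral_abs_sub_toReal_rnDeriv_le_two_mul_tvDist {Ω : Type*} [MeasurableSpace Ω]
    {P Q M : Measure Ω} [IsProbabilityMeasure P] [IsProbabilityMeasure Q] [SigmaFinite M]
    (hPM : P ≪ M) (hQM : Q ≪ M) :
    ∫ x, |(P.rnDeriv M x).toReal - (Q.rnDeriv M x).toReal| ∂M ≤ 2 * tvDist P Q := by
  set f := fun x ↦ (P.rnDeriv M x).toReal - (Q.rnDeriv M x).toReal
  have hf : Integrable f M := integrable_toReal_rnDeriv.sub integrable_toReal_rnDeriv
  have hf_zero : ∫ x, f x ∂M = 0 := by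
    simp [f, integral_sub integrable_toReal_rnDeriv integrable_toReal_rnDeriv,
      integral_toReal_rnDeriv hPM, integral_toReal_rnDeriv hQM]
  set A := {x | 0 ≤ f x}
  have hA : MeasurableSet A := measurableSet_le measurable_const
    ((measurable_rnDeriv P M).ennreal_toReal.sub (measurable_rnDeriv Q M).ennreal_toReal)
  have hpos : ∫ x, (f x)⁺ ∂M = P.real A - Q.real A := by
    have hposPart : (fun x ↦ (f x)⁺) = A.indicator f := by
      ext x
      by_cases hx : 0 ≤ f x
      · simp [A, hx]
      · simp [A, hx, (not_le.1 hx).le]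
    rw [hposPart, integral_indicator hA, integral_sub integrable_toReal_rnDeriv.integrableOn
      integrable_toReal_rnDeriv.integrableOn, setIntegral_toReal_rnDeriv hPM,
      setIntegral_toReal_rnDeriv hQM]
  calc ∫ x, |f x| ∂M = 2 * (P.real A - Q.real A) := by
        rw [integral_abs_eq_two_mul_integral_posPart_sub_integral hf, hf_zero, hpos, sub_zero]
    _ ≤ 2 * tvDist P Q := by
        gcongr
        exact (le_abs_self _).trans (abs_real_sub_le_tvDist P Q hA)

theorem jsDiv_le_tvDist {Ω : Type*} [MeasurableSpace Ω]
    (P Q : Measure Ω) [IsProbabilityMeasure P] [IsProbabilityMeasure Q] :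
    jsDiv P Q ≤ ((tvDist P Q : ℝ) : EReal) := by
  set M := (2 : ℝ≥0∞)⁻¹ • (P + Q)
  have hPM : P ≪ M := (AbsolutelyContinuous.rfl.add_right Q).smul_right (by simp)
  have hQM : Q ≪ M := (AbsolutelyContinuous.rfl.add_right' P).smul_right (by simp)
  set p := fun x ↦ (P.rnDeriv M x).toReal
  set q := fun x ↦ (Q.rnDeriv M x).toReal
  have hsum : ∀ᵐ x ∂M, p x + q x = 2 := toReal_rnDeriv_add_toReal_rnDeriv_half_smul_add P Q
  have hpq_mem : ∀ᵐ x ∂M, p x ∈ Set.Icc 0 2 ∧ q x ∈ Set.Icc 0 2 := by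
    filter_upwards [hsum] with x hx
    have hp0 : 0 ≤ p x := ENNReal.toReal_nonneg
    have hq0 : 0 ≤ q x := ENNReal.toReal_nonneg
    exact ⟨⟨hp0, by linarith⟩, ⟨hq0, by linarith⟩⟩
  have hp : Integrable (fun x ↦ p x * log (p x)) M :=
    integrable_mul_log_of_ae_mem_Icc (measurable_rnDeriv P M).ennreal_toReal.aestronglyMeasurable
      (hpq_mem.mono fun _ ↦ And.left)
  have hq : Integrable (fun x ↦ q x * log (q x)) M :=
    integrable_mul_log_of_ae_mem_Icc (measurable_rnDeriv Q M).ennreal_toReal.aestronglyMeasurable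
      (hpq_mem.mono fun _ ↦ And.right)
  have hpointwise :
      ∫ x, p x * log (p x) ∂M + ∫ x, q x * log (q x) ∂M ≤ ∫ x, |p x - q x| ∂M := by
    rw [← integral_add hp hq]
    refine integral_mono_ae (hp.add hq)
      (integrable_toReal_rnDeriv.sub integrable_toReal_rnDeriv).abs ?_
    filter_upwards [hsum] with x hx
    exact mul_log_add_mul_log_le_abs_sub ENNReal.toReal_nonneg ENNReal.toReal_nonneg hx
  have htv := integral_abs_sub_toReal_rnDeriv_le_two_mul_tvDist hPM hQM
  have hhalf : (1 / 2 : EReal) = ((1 / 2 : ℝ) : EReal) := by rw [EReal.coe_div]; norm_cast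
  rw [jsDiv, klDiv_eq_integral_rnDeriv_mul_log hPM hp, klDiv_eq_integral_rnDeriv_mul_log hQM hq,
    hhalf]
  exact_mod_cast (by linarith :
    1 / 2 * ∫ x, p x * log (p x) ∂M + 1 / 2 * ∫ x, q x * log (q x) ∂M ≤ tvDist P Q)
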